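/- For every θ ∈ ℂ: 2^{N−1}·∏_{θ'∈θ_p} sin((θ−θ')/2) = (−1)^{N−1}·sin(Nθ/2) and 2^{N−1}·∏_{θ'∈θ_a} sin((θ−θ')/2) = (−1)^N·cos(Nθ/2). -/

import Mathlib

open Finset

noncomputable section

/-- Antiperiodic momenta: θ_a = {(2j−1)π/N : j = 1,…,N}. -/
def thetaA (N : ℕ) (j : Fin N) : ℝ := (2 * (j : ℝ) + 1) * Real.pi / N

/-- Periodic momenta: θ_p = {2(j−1)π/N : j = 1,…,N}. -/
def thetaP (N : ℕ) (j : Fin N) : ℝ := (2 * (j : ℝ)) * Real.pi / N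

/-!
Put `ζ = e^{2πi/N}`, `ω = e^{-iπ/N}` and `z = e^{-2ix}`. Then
`2i·sin(x - jπ/N) = e^{ix} ω^j (1 - ζ^j z)`, and since `ζ` is a primitive `N`-th root of unity,
`∏_{j<N} (1 - ζ^j z) = 1 - z^N`, so the product of these factors is `e^{iNx} - e^{-iNx} = 2i·sin(Nx)`
times the phase `∏_{j<N} ω^j = (-i)^{N-1}` (a Gauss sum). Hence
`2^{N-1} ∏_{j<N} sin(x - jπ/N) = (-1)^{N-1} sin(Nx)`. The periodic momenta give this at
`x = θ/2`, the antiperiodic ones at `x = θ/2 - π/(2N)`, where `sin(Nθ/2 - π/2) = -cos(Nθ/2)`.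
-/

theorem IsPrimitiveRoot.prod_range_sub_pow_mul_eq_pow_sub_pow {R : Type*} [CommRing R] [IsDomain R]
    {ζ : R} {n : ℕ} (hn : 0 < n) (hζ : IsPrimitiveRoot ζ n) (x y : R) :
    ∏ j ∈ range n, (x - ζ ^ j * y) = x ^ n - y ^ n := by
  have : NeZero n := ⟨hn.ne'⟩
  rw [hζ.pow_sub_pow_eq_prod_sub_mul x y hn]
  refine prod_nbij (ζ ^ ·) (fun j _ => ?_) hζ.injOn_pow (fun ξ hξ => ?_) (fun _ _ => rfl)
  · rw [Polynomial.mem_nthRootsFinset hn, ← pow_mul, mul_comm, pow_mul, hζ.pow_eq_one, one_pow]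
  · obtain ⟨i, hi, rfl⟩ := hζ.eq_pow_of_pow_eq_one ((Polynomial.mem_nthRootsFinset hn 1).1 hξ)
    exact ⟨i, mem_range.2 hi, rfl⟩

namespace Complex

open scoped Real

theorem two_mul_I_mul_sin (w : ℂ) : 2 * I * sin w = exp (w * I) - exp (-w * I) := by
  linear_combination I * two_sin w + (exp (-w * I) - exp (w * I)) * I_sq

theorem prod_range_exp_neg_pi_mul_I_div_pow (N : ℕ) :
    ∏ j ∈ range N, exp (-π * I / N) ^ j = (-I) ^ (N - 1) := by
  rcases N.eq_zero_or_pos with rfl | hN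
  · simp
  have hsum : ((∑ j ∈ range N, j : ℕ) : ℂ) * 2 = N * (N - 1 : ℕ) := by
    exact_mod_cast sum_range_id_mul_two N
  have hN' : (N : ℂ) ≠ 0 := by exact_mod_cast hN.ne'
  rw [prod_pow_eq_pow_sum, ← exp_nat_mul, ← exp_neg_pi_div_two_mul_I, ← exp_nat_mul]
  congr 1
  field_simp
  linear_combination -hsum

theorem two_pow_mul_prod_sin_sub (N : ℕ) (hN : 0 < N) (x : ℂ) :
    2 ^ (N - 1) * ∏ j ∈ range N, sin (x - j * π / N) = (-1) ^ (N - 1) * sin (N * x) := by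
  set ω := exp (-π * I / N)
  set ζ := exp (2 * π * I / N)
  set z := exp (-2 * x * I)
  have hfactor (j : ℕ) :
      2 * I * sin (x - j * π / N) = exp (x * I) * ω ^ j * (1 - ζ ^ j * z) := by
    rw [two_mul_I_mul_sin, ← exp_nat_mul, ← exp_nat_mul, mul_sub, mul_one, ← exp_add,
      mul_assoc, ← exp_add, ← exp_add]
    congr 2 <;> ring
  have hsinN : exp (x * I) ^ N * (1 - z ^ N) = 2 * I * sin (N * x) := by
    rw [two_mul_I_mul_sin, mul_sub, mul_one, ← exp_nat_mul, ← exp_nat_mul, ← exp_add]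
    congr 2 <;> ring
  have hprod : (2 * I) ^ N * ∏ j ∈ range N, sin (x - j * π / N) =
      (2 * I * sin (N * x)) * (-I) ^ (N - 1) := by
    calc (2 * I) ^ N * ∏ j ∈ range N, sin (x - j * π / N)
        = ∏ j ∈ range N, exp (x * I) * ω ^ j * (1 - ζ ^ j * z) := by
          rw [← card_range N, ← prod_const, card_range, ← prod_mul_distrib]
          exact prod_congr rfl fun j _ => hfactor j
      _ = exp (x * I) ^ N * (1 - z ^ N) * ∏ j ∈ range N, ω ^ j := by
          rw [prod_mul_distrib, prod_mul_distrib, prod_const, card_range,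
            (isPrimitiveRoot_exp N hN.ne').prod_range_sub_pow_mul_eq_pow_sub_pow hN, one_pow]
          ring
      _ = _ := by rw [hsinN, prod_range_exp_neg_pi_mul_I_div_pow]
  obtain ⟨M, rfl⟩ : ∃ M, N = M + 1 := ⟨N - 1, by omega⟩
  rw [Nat.add_sub_cancel] at hprod ⊢
  have hI : 2 * I * I ^ M ≠ 0 := by simp [I_ne_zero]
  apply mul_left_cancel₀ hI
  linear_combination hprod

end Complex

/-- Product formulas over the full momentum sets:
2^{N−1}·∏_{θ'∈θ_p} sin((θ−θ')/2) = (−1)^{N−1} sin(Nθ/2) and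
2^{N−1}·∏_{θ'∈θ_a} sin((θ−θ')/2) = (−1)^N cos(Nθ/2). -/
theorem momentum_product_formulas (N : ℕ) (hN : 1 ≤ N) (θ : ℂ) :
    2 ^ (N - 1) * ∏ j : Fin N, Complex.sin ((θ - ((thetaP N j : ℝ) : ℂ)) / 2) =
        (-1 : ℂ) ^ (N - 1) * Complex.sin (N * θ / 2) ∧
      2 ^ (N - 1) * ∏ j : Fin N, Complex.sin ((θ - ((thetaA N j : ℝ) : ℂ)) / 2) =
        (-1 : ℂ) ^ N * Complex.cos (N * θ / 2) := by
  have hP (j : Fin N) : (θ - thetaP N j) / 2 = θ / 2 - (j : ℕ) * Real.pi / N := by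
    simp only [thetaP]; push_cast; ring
  have hA (j : Fin N) :
      (θ - thetaA N j) / 2 = θ / 2 - Real.pi / (2 * N) - (j : ℕ) * Real.pi / N := by
    simp only [thetaA]; push_cast; ring
  have hshift : (N : ℂ) * (θ / 2 - Real.pi / (2 * N)) = N * θ / 2 - Real.pi / 2 := by
    have : (N : ℂ) ≠ 0 := by exact_mod_cast Nat.one_le_iff_ne_zero.1 hN
    field_simp
  have hsign : (-1 : ℂ) ^ N = -(-1) ^ (N - 1) := by
    rw [← Nat.sub_add_cancel hN, pow_succ, Nat.add_sub_cancel]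
    ring
  constructor
  · simp_rw [hP]
    rw [Fin.prod_univ_eq_prod_range (fun j => Complex.sin (θ / 2 - j * Real.pi / N)),
      Complex.two_pow_mul_prod_sin_sub N hN, mul_div_assoc]
  · simp_rw [hA]
    rw [Fin.prod_univ_eq_prod_range
        (fun j => Complex.sin (θ / 2 - Real.pi / (2 * N) - j * Real.pi / N)),
      Complex.two_pow_mul_prod_sin_sub N hN, hshift, Complex.sin_sub_pi_div_two, hsign]
    ring
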